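/- arXiv:2007.10883 — 2 statements merged into one kernel-verified Lean document; each statement's English description precedes it below -/
import Mathlib

section
/- Let f : [0,1] → [0,1] be continuous and let x ∈ [0,1]. If the special α-limit set sα(x) contains a periodic orbit of period 3, then sα(x) also contains a periodic orbit of period 1 or of period 2. -/
open Filter Topology Set

/-- A backward orbit branch of `x`: `u 0 = x` and `f (u (n+1)) = u n`. -/
def IsBackwardBranch {X : Type*} (f : X → X) (x : X) (u : ℕ → X) : Prop :=
  u 0 = x ∧ ∀ n, f (u (n + 1)) = u n

/-- The special α-limit set of `x`: accumulation points of backward orbit branches. -/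
def sAlpha {X : Type*} [TopologicalSpace X] (f : X → X) (x : X) : Set X :=
  {y | ∃ u : ℕ → X, IsBackwardBranch f x u ∧ MapClusterPt y atTop u}

/-- The α-limit set of `x`: accumulation points of preimage sequences. -/
def alphaLimit {X : Type*} [TopologicalSpace X] (f : X → X) (x : X) : Set X :=
  {y | ∃ u : ℕ → X, (∀ n, f^[n] (u n) = x) ∧ MapClusterPt y atTop u}

/-!
Let `b` be the point of the 3-cycle lying between the other two, say `a < b < c` with `f b = c`
and `f c = a` (otherwise reverse the order). For `g = f^[2]`, `g b = a < b` while `g s = c ≥ s`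
at a preimage `s ∈ [b, c]` of `b`, so `g` has a fixed point `q > b`. A backward branch of `x`
accumulating at `b` passes through `(a, q) = (g b, g q)`, hence through the `g`-image of some
`w ∈ (b, q)`. Pulling `w` back under `g` monotonically between `w` and a fixed point of `g` gives
a backward `g`-branch converging to a fixed point of `g`. This point lies in `sAlpha f x`, which
is forward invariant, so it is a fixed point or a period-2 point of `f` with orbit in `sAlpha f x`.
-/

open Function

section BackwardBranch

variable {X : Type*} {f : X → X} {x y : X} {u : ℕ → X}

theorem IsBackwardBranch.iterate_apply (hu : IsBackwardBranch f x u) (n : ℕ) :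
    f^[n] (u n) = x := by
  induction n with
  | zero => exact hu.1
  | succ n ih => rw [iterate_succ_apply, hu.2, ih]

variable [TopologicalSpace X]

theorem IsBackwardBranch.isFixedPt_of_tendsto [T2Space X] {L : X} (hu : IsBackwardBranch f x u)
    (hf : Continuous f) (hL : Tendsto u atTop (𝓝 L)) : IsFixedPt f L := by
  have hshift : Tendsto (fun n => f (u (n + 1))) atTop (𝓝 (f L)) :=
    (hf.tendsto L).comp (hL.comp (tendsto_add_atTop_nat 1))
  simp only [hu.2] at hshift
  exact tendsto_nhds_unique hshift hL

theorem sAlpha_subset_of_iterate_eq {m : ℕ} (h : f^[m] y = x) : sAlpha f y ⊆ sAlpha f x := by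
  rintro z ⟨u, ⟨hu0, hu⟩, hz⟩
  refine ⟨fun n => if n ≤ m then f^[m - n] y else u (n - m),
    ⟨by simpa using h, fun n => ?_⟩, MapClusterPt.of_comp (tendsto_add_atTop_nat m) ?_⟩
  · rcases lt_trichotomy n m with hnm | rfl | hnm
    · simp only [show n + 1 ≤ m by omega, show n ≤ m by omega, if_true,
        ← iterate_succ_apply' f, show (m - (n + 1)).succ = m - n by omega]
    · simpa [hu0] using hu 0
    · simp only [show ¬n + 1 ≤ m by omega, show ¬n ≤ m by omega, if_false,
        show n + 1 - m = n - m + 1 by omega, hu]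
  · convert hz using 1
    funext j
    cases j <;> simp [hu0]

theorem sAlpha_iterate_subset {k : ℕ} (hk : 0 < k) : sAlpha (f^[k]) x ⊆ sAlpha f x := by
  rintro y ⟨u, ⟨hu0, hu⟩, hy⟩
  -- interpolate `u` by an `f`-branch: index `k * d + r` carries `f^[k - r] (u (d + 1))`
  refine ⟨fun n => f^[k - n % k] (u (n / k + 1)), ⟨by simp [hu, hu0], fun n => ?_⟩,
    MapClusterPt.of_comp (tendsto_id.const_mul_atTop' hk) ?_⟩
  · dsimp only
    have hr := Nat.mod_lt n hk
    have hn := Nat.mod_add_div n k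
    rcases (show n % k + 1 < k ∨ n % k + 1 = k by omega) with hlt | hwrap
    · obtain ⟨hd, hr'⟩ := (Nat.div_mod_unique hk).2
        (⟨by omega, hlt⟩ : n % k + 1 + k * (n / k) = n + 1 ∧ _)
      rw [hd, hr', ← iterate_succ_apply' f, show (k - (n % k + 1)).succ = k - n % k by omega]
    · obtain ⟨hd, hr'⟩ := (Nat.div_mod_unique hk).2
        (⟨by rw [Nat.mul_succ]; omega, hk⟩ : 0 + k * (n / k + 1) = n + 1 ∧ _)
      simp [hd, hr', hu, show k - n % k = 1 by omega]
  · convert hy using 1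
    funext j
    simp [Nat.mul_div_cancel_left j hk, hu]

theorem mapsTo_sAlpha (hf : Continuous f) : MapsTo f (sAlpha f x) (sAlpha f x) := by
  rintro y ⟨u, hu, hy⟩
  refine ⟨u, hu, ?_⟩
  have hshift : MapClusterPt y atTop (fun n => u (n + 1)) := by
    rwa [← comp_def, mapClusterPt_comp, map_add_atTop_eq_nat]
  simpa [comp_def, hu.2] using hshift.continuousAt_comp hf.continuousAt

end BackwardBranch

section LinearOrder

variable {X : Type*} [ConditionallyCompleteLinearOrder X] [TopologicalSpace X] [OrderTopology X]
  [DenselyOrdered X] {f : X → X} {x w a b c : X}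

theorem exists_strictMono_backwardBranch (hf : Continuous f) {q : X} (hq : IsFixedPt f q)
    (hwq : w < q) (hfw : f w < w) :
    ∃ u, IsBackwardBranch f w u ∧ StrictMono u ∧ ∀ n, u n < q := by
  have step : ∀ t : {t // t < q ∧ f t < t}, ∃ t' : {t // t < q ∧ f t < t},
      t.1 < t'.1 ∧ f t'.1 = t.1 := by
    rintro ⟨t, htq, hft⟩
    obtain ⟨t', ⟨htt', ht'q⟩, hft'⟩ := intermediate_value_Ioo htq.le hf.continuousOn
      (show t ∈ Ioo (f t) (f q) from ⟨hft, hq.symm ▸ htq⟩)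
    exact ⟨⟨t', ht'q, hft' ▸ htt'⟩, htt', hft'⟩
  choose next hlt hnext using step
  refine ⟨fun n => (next^[n] ⟨w, hwq, hfw⟩).1, ⟨rfl, fun n => ?_⟩,
    strictMono_nat_of_lt_succ fun n => ?_, fun n => (next^[n] _).2.1⟩
  · simp only [iterate_succ_apply', hnext]
  · simp only [iterate_succ_apply', hlt]

theorem exists_backwardBranch_tendsto_isFixedPt_of_lt (hf : Continuous f) (hc : c ≤ f c)
    (hwc : w ≤ c) (hfw : f w < w) :
    ∃ u L, IsBackwardBranch f w u ∧ Tendsto u atTop (𝓝 L) ∧ IsFixedPt f L := by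
  obtain ⟨q, hq, hfix⟩ := exists_mem_uIcc_isFixedPt hf.continuousOn hc hfw.le
  rw [uIcc_of_ge hwc] at hq
  have hwq : w < q := hq.1.lt_of_ne fun h => hfw.ne (h ▸ hfix)
  obtain ⟨u, hu, hmono, hbdd⟩ := exists_strictMono_backwardBranch hf hfix hwq hfw
  have hL := tendsto_atTop_ciSup hmono.monotone ⟨q, forall_mem_range.2 fun n => (hbdd n).le⟩
  exact ⟨u, _, hu, hL, hu.isFixedPt_of_tendsto hf hL⟩

theorem exists_backwardBranch_tendsto_isFixedPt (hf : Continuous f) (hb : f b ≤ b)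
    (hc : c ≤ f c) (hw : w ∈ Icc b c) :
    ∃ u L, IsBackwardBranch f w u ∧ Tendsto u atTop (𝓝 L) ∧ IsFixedPt f L := by
  rcases lt_trichotomy (f w) w with hfw | hfw | hfw
  · exact exists_backwardBranch_tendsto_isFixedPt_of_lt hf hc hw.2 hfw
  · exact ⟨fun _ => w, w, ⟨rfl, fun _ => hfw⟩, tendsto_const_nhds, hfw⟩
  · exact exists_backwardBranch_tendsto_isFixedPt_of_lt (X := Xᵒᵈ) hf hb hw.1 hfw

theorem exists_mem_sAlpha_isFixedPt_iterate_two_of_lt (hf : Continuous f) (hab : a < b)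
    (hbc : b < c) (hfb : f b = c) (hfc : f c = a) (hb : b ∈ sAlpha f x) :
    ∃ q ∈ sAlpha f x, IsFixedPt f^[2] q := by
  have hg : Continuous f^[2] := hf.iterate 2
  have hgb : f^[2] b = a := by simp [hfb, hfc]
  obtain ⟨s, hs, hfs⟩ := intermediate_value_Icc' hbc.le hf.continuousOn
    (show b ∈ Icc (f c) (f b) from hfc ▸ hfb ▸ ⟨hab.le, hbc.le⟩)
  obtain ⟨q, hq, hfix⟩ := exists_mem_uIcc_isFixedPt hg.continuousOn
    (show s ≤ f^[2] s by simpa [hfs, hfb] using hs.2) (hgb.trans_lt hab).le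
  rw [uIcc_of_ge hs.1] at hq
  have hbq : b < q := hq.1.lt_of_ne <| by rintro rfl; exact hab.ne (hgb.symm.trans hfix.eq)
  obtain ⟨v, hv, hvb⟩ := hb
  obtain ⟨m, hvm⟩ := (hvb.frequently (Ioo_mem_nhds hab hbq)).exists
  obtain ⟨w, hw, hgw⟩ := intermediate_value_Ioo hbq.le hg.continuousOn
    (show v m ∈ Ioo (f^[2] b) (f^[2] q) by rwa [hgb, hfix.eq])
  obtain ⟨u, L, hu, hL, hLfix⟩ := exists_backwardBranch_tendsto_isFixedPt hg
    (hgb.trans_lt hab).le hfix.eq.ge (Ioo_subset_Icc_self hw)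
  have hwx : f^[m + 2] w = x := by rw [iterate_add_apply, hgw, hv.iterate_apply]
  exact ⟨L, sAlpha_subset_of_iterate_eq hwx
    (sAlpha_iterate_subset two_pos ⟨u, hu, hL.mapClusterPt⟩), hLfix⟩

theorem exists_mem_sAlpha_isFixedPt_iterate_two (hf : Continuous f)
    (hbtw : a < b ∧ b < c ∨ c < b ∧ b < a) (hfb : f b = c) (hfc : f c = a)
    (hb : b ∈ sAlpha f x) : ∃ q ∈ sAlpha f x, IsFixedPt f^[2] q := by
  rcases hbtw with ⟨hab, hbc⟩ | ⟨hcb, hba⟩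
  · exact exists_mem_sAlpha_isFixedPt_iterate_two_of_lt hf hab hbc hfb hfc hb
  · exact exists_mem_sAlpha_isFixedPt_iterate_two_of_lt (X := Xᵒᵈ) hf hba hcb hfb hfc hb

end LinearOrder

theorem stmt2 (f : unitInterval → unitInterval) (hf : Continuous f) (x : unitInterval)
    (p : unitInterval) (hp3 : f^[3] p = p) (hpmin : ∀ i, 0 < i → i < 3 → f^[i] p ≠ p)
    (horb : ∀ i, f^[i] p ∈ sAlpha f x) :
    (∃ q, f q = q ∧ q ∈ sAlpha f x) ∨
    (∃ q, f^[2] q = q ∧ f q ≠ q ∧ q ∈ sAlpha f x ∧ f q ∈ sAlpha f x) := by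
  have h3 : f (f (f p)) = p := hp3
  have h01 : p ≠ f p := fun h => hpmin 1 one_pos (by norm_num) h.symm
  have h02 : p ≠ f (f p) := fun h => hpmin 2 two_pos (by norm_num) h.symm
  have h12 : f p ≠ f (f p) := fun h => h02 (h3.symm.trans (congrArg f h).symm)
  obtain ⟨q, hq, hfix⟩ : ∃ q ∈ sAlpha f x, IsFixedPt f^[2] q := by
    rcases (by grind : (p < f p ∧ f p < f (f p) ∨ f (f p) < f p ∧ f p < p) ∨
        (f p < f (f p) ∧ f (f p) < p ∨ p < f (f p) ∧ f (f p) < f p) ∨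
        (f (f p) < p ∧ p < f p ∨ f p < p ∧ p < f (f p))) with h | h | h
    · exact exists_mem_sAlpha_isFixedPt_iterate_two hf h rfl h3 (horb 1)
    · exact exists_mem_sAlpha_isFixedPt_iterate_two hf h h3 rfl (horb 2)
    · exact exists_mem_sAlpha_isFixedPt_iterate_two hf h rfl rfl (horb 0)
  by_cases hq1 : f q = q
  · exact Or.inl ⟨q, hq1, hq⟩
  · exact Or.inr ⟨q, hfix, hq1, hq, mapsTo_sAlpha hf hq⟩
end

section
/- Fix strictly decreasing sequences 1 = a₁ > b₁ > a₂ > b₂ > ⋯ converging to 0, and let f : [0,1] → [0,1] be the continuous map with f(0) = 0, f(a_i) = a_i, f(b_i) = a_{i+2} for all i, and linear on each interval [a_{i+1}, b_i] and [b_i, a_i]. Then sα(x) = {a₁, …, a_n} for every x ∈ (a_{n+1}, a_n], and sα(0) = {0}. In particular, f has a strictly increasing sequence of special α-limit sets not contained in any maximal special α-limit set. -/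
open Filter Topology Set

/-! The intervals `(a (m+1), a m]` ("bands") partition `(0, 1]`, and `f` maps the closure of band
`m` into `[a (m+2), a m]`; so a backward branch can only move to bands of smaller index, and the
only preimage of `0` is `0`. A preimage inside band `m` of a point of band `m` lies on the expanding
piece `[b m, a m]`, where the distance to the fixed point `a m` is multiplied by
`(a m - b m) / (a m - a (m+2)) < 1` at each backward step; hence a branch that settles in band `m`
converges to `a m`, and `sα(x) ⊆ {a 1, …, a n}` for `x` in band `n`. Conversely, the expanding piece
covers `[a (m+2), a m]`, which contains the bands `m` and `m+1`, so from band `n` a backward branch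
can descend to any band `i ≤ n` and then stay there, accumulating at `a i`. -/

theorem MapClusterPt.eq_of_tendsto {X α : Type*} [TopologicalSpace X] [T2Space X]
    {F : Filter α} {u : α → X} {x y : X} (h : MapClusterPt y F u) (hu : Tendsto u F (𝓝 x)) :
    y = x :=
  eq_of_nhds_neBot (h.clusterPt.mono hu)

theorem mapClusterPt_add_atTop_iff {X : Type*} [TopologicalSpace X] {u : ℕ → X} {y : X}
    (k : ℕ) : MapClusterPt y atTop (fun n => u (n + k)) ↔ MapClusterPt y atTop u := by
  change MapClusterPt y atTop (u ∘ (· + k)) ↔ _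
  rw [mapClusterPt_comp, map_add_atTop_eq_nat]

namespace IsBackwardBranch

variable {X : Type*} {f : X → X} {x : X} {u : ℕ → X}

theorem comp_add (hu : IsBackwardBranch f x u) (k : ℕ) :
    IsBackwardBranch f (u k) (fun n => u (n + k)) :=
  ⟨by simp, fun n => by simpa [Nat.add_right_comm] using hu.2 (n + k)⟩

theorem mem_sAlpha [TopologicalSpace X] {y : X} (hu : IsBackwardBranch f x u)
    (hy : MapClusterPt y atTop u) (k : ℕ) : y ∈ sAlpha f (u k) :=
  ⟨_, hu.comp_add k, (mapClusterPt_add_atTop_iff k).2 hy⟩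

end IsBackwardBranch

section BackwardBranch

variable {X : Type*} {f : X → X}

theorem exists_isBackwardBranch_forall_mem {S : Set X} (hpre : ∀ z ∈ S, ∃ y ∈ S, f y = z)
    {x : X} (hx : x ∈ S) : ∃ u, IsBackwardBranch f x u ∧ ∀ k, u k ∈ S := by
  choose g hgS hgf using hpre
  let G : S → S := fun z => ⟨g z z.2, hgS z z.2⟩
  refine ⟨fun k => (G^[k] ⟨x, hx⟩ : X), ⟨rfl, fun k => ?_⟩, fun k => (G^[k] ⟨x, hx⟩).2⟩
  simp only [Function.iterate_succ_apply']
  exact hgf _ _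

variable [TopologicalSpace X]

theorem sAlpha_subset_of_apply_eq {x y : X} (h : f y = x) : sAlpha f y ⊆ sAlpha f x := by
  rintro z ⟨u, hu, hz⟩
  refine ⟨fun | 0 => x | n + 1 => u n, ⟨rfl, ?_⟩, (mapClusterPt_add_atTop_iff 1).1 hz⟩
  rintro (_ | n)
  exacts [(congrArg f hu.1).trans h, hu.2 n]

theorem sAlpha_eq_singleton [T2Space X] {x : X} (hx : f x = x) (h : ∀ y, f y = x → y = x) :
    sAlpha f x = {x} := by
  refine subset_antisymm ?_ fun _ hy => ?_
  · rintro y ⟨u, hu, hy⟩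
    have hconst : ∀ k, u k = x := by
      intro k
      induction k with
      | zero => exact hu.1
      | succ k ih => exact h _ (ih ▸ hu.2 k)
    exact hy.eq_of_tendsto (by simp [funext hconst])
  · rw [mem_singleton_iff.1 hy]
    exact ⟨fun _ => x, ⟨rfl, fun _ => hx⟩, tendsto_const_nhds.mapClusterPt⟩

end BackwardBranch

theorem add_div_mul_mem_uIcc {p q c d z : ℝ} (hcd : c < d) (hcz : c ≤ z) (hzd : z ≤ d) :
    p + (q - p) / (d - c) * (z - c) ∈ uIcc p q := by
  have ht₀ : 0 ≤ (z - c) / (d - c) := div_nonneg (by linarith) (by linarith)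
  have ht₁ : (z - c) / (d - c) ≤ 1 := (div_le_one (by linarith)).2 (by linarith)
  rw [div_mul_comm, mem_uIcc]
  rcases le_total p q with hpq | hqp
  · left; constructor <;> nlinarith
  · right; constructor <;> nlinarith

structure IsStaircaseMap (f : unitInterval → unitInterval) (a b : ℕ → unitInterval) : Prop where
  a_one : a 1 = 1
  a_succ_lt_b : ∀ i, 1 ≤ i → a (i + 1) < b i
  b_lt_a : ∀ i, 1 ≤ i → b i < a i
  tendsto_a : Tendsto (fun i => (a i : ℝ)) atTop (𝓝 0)
  map_zero : f 0 = 0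
  apply_of_le_b : ∀ i, 1 ≤ i → ∀ x : unitInterval, a (i + 1) ≤ x → x ≤ b i →
    (f x : ℝ) = (a (i + 1) : ℝ) +
      (((a (i + 2) : ℝ) - (a (i + 1) : ℝ)) / ((b i : ℝ) - (a (i + 1) : ℝ))) *
        ((x : ℝ) - (a (i + 1) : ℝ))
  apply_of_b_le : ∀ i, 1 ≤ i → ∀ x : unitInterval, b i ≤ x → x ≤ a i →
    (f x : ℝ) = (a (i + 2) : ℝ) +
      (((a i : ℝ) - (a (i + 2) : ℝ)) / ((a i : ℝ) - (b i : ℝ))) *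
        ((x : ℝ) - (b i : ℝ))

noncomputable def contractionRatio (a b : ℕ → unitInterval) (m : ℕ) : ℝ :=
  ((a m : ℝ) - b m) / ((a m : ℝ) - a (m + 2))

namespace IsStaircaseMap

variable {f : unitInterval → unitInterval} {a b : ℕ → unitInterval} (hS : IsStaircaseMap f a b)
include hS

theorem a_succ_lt_a {i : ℕ} (hi : 1 ≤ i) : a (i + 1) < a i :=
  (hS.a_succ_lt_b i hi).trans (hS.b_lt_a i hi)

theorem strictAnti_a_succ : StrictAnti fun n => a (n + 1) :=
  strictAnti_nat_of_succ_lt fun n => hS.a_succ_lt_a (by omega)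

theorem a_lt_a {i j : ℕ} (hi : 1 ≤ i) (hij : i < j) : a j < a i := by
  obtain ⟨i, rfl⟩ := Nat.exists_eq_add_of_le' hi
  obtain ⟨j, rfl⟩ := Nat.exists_eq_add_of_le' (hi.trans hij.le)
  exact hS.strictAnti_a_succ (by omega)

theorem a_le_a {i j : ℕ} (hi : 1 ≤ i) (hij : i ≤ j) : a j ≤ a i :=
  hij.eq_or_lt.elim (fun h => h ▸ le_rfl) fun h => (hS.a_lt_a hi h).le

theorem a_pos {i : ℕ} (hi : 1 ≤ i) : 0 < a i :=
  unitInterval.nonneg'.trans_lt (hS.a_succ_lt_a hi)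

theorem a_mem_Ioc {n : ℕ} (hn : 1 ≤ n) : a n ∈ Ioc (a (n + 1)) (a n) :=
  ⟨hS.a_succ_lt_a hn, le_rfl⟩

theorem exists_mem_Ioc {y : unitInterval} (hy : 0 < y) :
    ∃ m, 1 ≤ m ∧ y ∈ Ioc (a (m + 1)) (a m) := by
  classical
  have hex : ∃ i, (a (i + 1) : ℝ) < y :=
    (((tendsto_add_atTop_iff_nat 1).2 hS.tendsto_a).eventually (gt_mem_nhds hy)).exists
  obtain ⟨m, hm⟩ : ∃ m, Nat.find hex = m + 1 := Nat.exists_eq_succ_of_ne_zero fun h0 => by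
    have h1 := Nat.find_spec hex
    rw [h0, zero_add, hS.a_one] at h1
    exact h1.not_ge y.2.2
  refine ⟨m + 1, by omega, ?_, ?_⟩
  · have h := Nat.find_spec hex
    rw [hm] at h
    exact_mod_cast h
  · exact_mod_cast not_lt.1 (Nat.find_min hex (by omega : m < Nat.find hex))

theorem apply_mem_Icc_of_le_b {m : ℕ} (hm : 1 ≤ m) {z : unitInterval} (h₁ : a (m + 1) ≤ z)
    (h₂ : z ≤ b m) : (f z : ℝ) ∈ Icc (a (m + 2) : ℝ) (a (m + 1)) := by
  rw [hS.apply_of_le_b m hm z h₁ h₂,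
    ← uIcc_of_ge (Subtype.coe_le_coe.2 (hS.a_succ_lt_a (i := m + 1) (by omega)).le)]
  exact add_div_mul_mem_uIcc (hS.a_succ_lt_b m hm) h₁ h₂

theorem apply_mem_Icc_of_b_le {m : ℕ} (hm : 1 ≤ m) {z : unitInterval} (h₁ : b m ≤ z)
    (h₂ : z ≤ a m) : (f z : ℝ) ∈ Icc (a (m + 2) : ℝ) (a m) := by
  rw [hS.apply_of_b_le m hm z h₁ h₂,
    ← uIcc_of_le (Subtype.coe_le_coe.2 (hS.a_lt_a hm (by omega : m < m + 2)).le)]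
  exact add_div_mul_mem_uIcc (hS.b_lt_a m hm) h₁ h₂

theorem apply_mem_Icc {m : ℕ} (hm : 1 ≤ m) {z : unitInterval} (h₁ : a (m + 1) ≤ z)
    (h₂ : z ≤ a m) : (f z : ℝ) ∈ Icc (a (m + 2) : ℝ) (a m) := by
  rcases le_total z (b m) with hzb | hbz
  · exact Icc_subset_Icc_right (Subtype.coe_le_coe.2 (hS.a_le_a hm (by omega)))
      (hS.apply_mem_Icc_of_le_b hm h₁ hzb)
  · exact hS.apply_mem_Icc_of_b_le hm hbz h₂

theorem contractionRatio_pos {m : ℕ} (hm : 1 ≤ m) : 0 < contractionRatio a b m :=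
  div_pos (sub_pos.2 (hS.b_lt_a m hm)) (sub_pos.2 (hS.a_lt_a hm (by omega)))

theorem contractionRatio_lt_one {m : ℕ} (hm : 1 ≤ m) : contractionRatio a b m < 1 := by
  have h₁ : (a (m + 2) : ℝ) < a (m + 1) := hS.a_succ_lt_a (i := m + 1) (by omega)
  have h₂ : (a (m + 1) : ℝ) < b m := hS.a_succ_lt_b m hm
  have h₃ : (b m : ℝ) < a m := hS.b_lt_a m hm
  exact (div_lt_one (by linarith)).2 (by linarith)

theorem sub_eq_contractionRatio_mul {m : ℕ} (hm : 1 ≤ m) {z : unitInterval} (h₁ : b m ≤ z)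
    (h₂ : z ≤ a m) : (a m : ℝ) - z = contractionRatio a b m * (a m - f z) := by
  have hb : (b m : ℝ) < a m := hS.b_lt_a m hm
  have ha : (a (m + 2) : ℝ) < a m := hS.a_lt_a hm (by omega)
  have hb' : (a m : ℝ) - b m ≠ 0 := by linarith
  have ha' : (a m : ℝ) - a (m + 2) ≠ 0 := by linarith
  rw [hS.apply_of_b_le m hm z h₁ h₂, contractionRatio]
  field_simp
  ring

theorem apply_pos {y : unitInterval} (hy : 0 < y) : 0 < f y := by
  obtain ⟨m, hm, hym⟩ := hS.exists_mem_Ioc hy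
  exact (hS.a_pos (i := m + 2) (by omega)).trans_le (hS.apply_mem_Icc hm hym.1.le hym.2).1

theorem exists_mem_Ioc_of_apply_mem {n : ℕ} {y : unitInterval}
    (hy : f y ∈ Ioc (a (n + 1)) (a n)) : ∃ m, 1 ≤ m ∧ m ≤ n ∧ y ∈ Ioc (a (m + 1)) (a m) := by
  have hy₀ : 0 < y := by
    refine unitInterval.nonneg'.lt_of_ne fun h => ?_
    rw [← h, hS.map_zero] at hy
    exact hy.1.not_ge unitInterval.nonneg'
  obtain ⟨m, hm, hym⟩ := hS.exists_mem_Ioc hy₀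
  refine ⟨m, hm, ?_, hym⟩
  by_contra! hnm
  have hfy : f y ≤ a m := (hS.apply_mem_Icc hm hym.1.le hym.2).2
  exact hy.1.not_ge (hfy.trans (hS.a_le_a (by omega) hnm))

theorem exists_apply_eq {m : ℕ} (hm : 1 ≤ m) {w : unitInterval} (h₁ : a (m + 2) ≤ w)
    (h₂ : w ≤ a m) : ∃ z ∈ Ioc (a (m + 1)) (a m), f z = w := by
  set ρ := contractionRatio a b m
  have hρ : 0 < ρ := hS.contractionRatio_pos hm
  have hρa : ρ * ((a m : ℝ) - a (m + 2)) = a m - b m :=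
    div_mul_cancel₀ _ (sub_pos.2 (Subtype.coe_lt_coe.2 (hS.a_lt_a hm (by omega)))).ne'
  set r : ℝ := a m - ρ * (a m - w)
  have hbr : (b m : ℝ) ≤ r := by
    have : ρ * ((a m : ℝ) - w) ≤ ρ * (a m - a (m + 2)) :=
      mul_le_mul_of_nonneg_left (sub_le_sub_left (Subtype.coe_le_coe.2 h₁) _) hρ.le
    linarith
  have hra : r ≤ a m := by
    have : 0 ≤ ρ * ((a m : ℝ) - w) := mul_nonneg hρ.le (sub_nonneg.2 h₂)
    linarith
  let z : unitInterval := ⟨r, (b m).2.1.trans hbr, hra.trans (a m).2.2⟩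
  have hz := hS.sub_eq_contractionRatio_mul hm (z := z) hbr hra
  refine ⟨z, ⟨(hS.a_succ_lt_b m hm).trans_le hbr, hra⟩, Subtype.ext ?_⟩
  have : ρ * ((a m : ℝ) - f z) = ρ * (a m - w) := by rw [← hz]; simp [z, r]
  linarith [mul_left_cancel₀ hρ.ne' this]

theorem tendsto_of_forall_mem_Ioc {m : ℕ} (hm : 1 ≤ m) {u : ℕ → unitInterval}
    (hu : ∀ k, f (u (k + 1)) = u k) (h : ∀ k, u k ∈ Ioc (a (m + 1)) (a m)) :
    Tendsto u atTop (𝓝 (a m)) := by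
  set ρ := contractionRatio a b m
  have hb : ∀ k, b m ≤ u (k + 1) := fun k => by
    by_contra! hlt
    have := (hS.apply_mem_Icc_of_le_b hm (h (k + 1)).1.le hlt.le).2
    rw [hu k] at this
    exact (h k).1.not_ge this
  have hgeom : ∀ k, (a m : ℝ) - u k = ρ ^ k * (a m - u 0) := by
    intro k
    induction k with
    | zero => simp
    | succ k ih =>
      rw [hS.sub_eq_contractionRatio_mul hm (hb k) (h (k + 1)).2, hu k, ih, pow_succ]
      ring
  have hρ := tendsto_pow_atTop_nhds_zero_of_lt_one (hS.contractionRatio_pos hm).le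
    (hS.contractionRatio_lt_one hm)
  have hlim : Tendsto (fun k => (a m : ℝ) - ρ ^ k * (a m - u 0)) atTop
      (𝓝 (a m - 0 * (a m - u 0))) := tendsto_const_nhds.sub (hρ.mul_const _)
  rw [zero_mul, sub_zero] at hlim
  exact tendsto_subtype_rng.2 (hlim.congr fun k => by linarith [hgeom k])

theorem a_succ_notMem (n : ℕ) : a (n + 1) ∉ {y | ∃ i, 1 ≤ i ∧ i ≤ n ∧ y = a i} := by
  rintro ⟨i, hi, hin, heq⟩
  exact (hS.a_lt_a hi (by omega)).ne heq

theorem sAlpha_subset {n : ℕ} (hn : 1 ≤ n) {x : unitInterval} (hx : x ∈ Ioc (a (n + 1)) (a n)) :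
    sAlpha f x ⊆ {y | ∃ i, 1 ≤ i ∧ i ≤ n ∧ y = a i} := by
  induction n using Nat.strong_induction_on generalizing x with
  | _ n ih =>
  rintro y ⟨u, hu, hy⟩
  by_contra hyn
  have hstay : ∀ k, u k ∈ Ioc (a (n + 1)) (a n) := by
    intro k
    induction k with
    | zero => exact hu.1 ▸ hx
    | succ k hk =>
      obtain ⟨m, hm, hmn, hum⟩ := hS.exists_mem_Ioc_of_apply_mem (hu.2 k ▸ hk)
      rcases hmn.lt_or_eq with hlt | rfl
      · obtain ⟨i, hi, him, rfl⟩ := ih m hlt hm hum (hu.mem_sAlpha hy (k + 1))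
        exact absurd ⟨i, hi, by omega, rfl⟩ hyn
      · exact hum
  exact hyn ⟨n, hn, le_rfl, hy.eq_of_tendsto (hS.tendsto_of_forall_mem_Ioc hn hu.2 hstay)⟩

theorem a_mem_sAlpha {i n : ℕ} (hi : 1 ≤ i) (hin : i ≤ n) {x : unitInterval}
    (hx : x ∈ Ioc (a (n + 1)) (a n)) : a i ∈ sAlpha f x := by
  induction n, hin using Nat.le_induction generalizing x with
  | base =>
    have hpre : ∀ z ∈ Ioc (a (i + 1)) (a i), ∃ y ∈ Ioc (a (i + 1)) (a i), f y = z :=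
      fun z hz => hS.exists_apply_eq hi ((hS.a_succ_lt_a (by omega)).le.trans hz.1.le) hz.2
    obtain ⟨u, hu, hstay⟩ := exists_isBackwardBranch_forall_mem hpre hx
    exact ⟨u, hu, (hS.tendsto_of_forall_mem_Ioc hi hu.2 hstay).mapClusterPt⟩
  | succ n hin ih =>
    obtain ⟨y, hy, hfy⟩ :=
      hS.exists_apply_eq (hi.trans hin) hx.1.le (hx.2.trans (hS.a_succ_lt_a (hi.trans hin)).le)
    exact sAlpha_subset_of_apply_eq hfy (ih hy)

theorem sAlpha_eq {n : ℕ} (hn : 1 ≤ n) {x : unitInterval} (hx : x ∈ Ioc (a (n + 1)) (a n)) :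
    sAlpha f x = {y | ∃ i, 1 ≤ i ∧ i ≤ n ∧ y = a i} := by
  refine (hS.sAlpha_subset hn hx).antisymm ?_
  rintro _ ⟨i, hi, hin, rfl⟩
  exact hS.a_mem_sAlpha hi hin hx

theorem sAlpha_zero : sAlpha f 0 = {0} :=
  sAlpha_eq_singleton hS.map_zero fun y hy => by
    by_contra hy₀
    exact (hS.apply_pos (unitInterval.nonneg'.lt_of_ne' hy₀)).ne' hy

theorem sAlpha_a_ssubset {n : ℕ} (hn : 1 ≤ n) : sAlpha f (a n) ⊂ sAlpha f (a (n + 1)) := by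
  rw [hS.sAlpha_eq hn (hS.a_mem_Ioc hn), hS.sAlpha_eq (by omega) (hS.a_mem_Ioc (by omega))]
  refine ssubset_of_subset_not_subset (fun y ⟨i, hi, hin, hy⟩ => ⟨i, hi, by omega, hy⟩) ?_
  exact fun h => hS.a_succ_notMem n (h ⟨n + 1, by omega, le_rfl, rfl⟩)

theorem exists_a_notMem_sAlpha (y : unitInterval) : ∃ n, 1 ≤ n ∧ a n ∉ sAlpha f y := by
  rcases (unitInterval.nonneg' (t := y)).eq_or_lt with rfl | hy
  · refine ⟨1, le_rfl, ?_⟩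
    rw [hS.sAlpha_zero, mem_singleton_iff]
    exact (hS.a_pos le_rfl).ne'
  · obtain ⟨m, hm, hym⟩ := hS.exists_mem_Ioc hy
    exact ⟨m + 1, by omega, hS.sAlpha_eq hm hym ▸ hS.a_succ_notMem m⟩

end IsStaircaseMap

theorem stmt16_general (f : unitInterval → unitInterval)
    (a b : ℕ → unitInterval)
    (ha1 : a 1 = 1)
    (horder : ∀ i, 1 ≤ i → a (i + 1) < b i ∧ b i < a i)
    (hlim : Tendsto (fun i => (a i : ℝ)) atTop (nhds 0))
    (hf0 : f 0 = 0)
    (hlin1 : ∀ i, 1 ≤ i → ∀ x : unitInterval, a (i + 1) ≤ x → x ≤ b i →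
      (f x : ℝ) = (a (i + 1) : ℝ) +
        (((a (i + 2) : ℝ) - (a (i + 1) : ℝ)) / ((b i : ℝ) - (a (i + 1) : ℝ))) *
          ((x : ℝ) - (a (i + 1) : ℝ)))
    (hlin2 : ∀ i, 1 ≤ i → ∀ x : unitInterval, b i ≤ x → x ≤ a i →
      (f x : ℝ) = (a (i + 2) : ℝ) +
        (((a i : ℝ) - (a (i + 2) : ℝ)) / ((a i : ℝ) - (b i : ℝ))) *
          ((x : ℝ) - (b i : ℝ))) :
    (∀ n, 1 ≤ n → ∀ x : unitInterval, a (n + 1) < x → x ≤ a n →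
      sAlpha f x = {y | ∃ i, 1 ≤ i ∧ i ≤ n ∧ y = a i}) ∧
    sAlpha f 0 = {0} ∧
    (∀ n, 1 ≤ n → sAlpha f (a n) ⊂ sAlpha f (a (n + 1))) ∧
    ¬ ∃ y : unitInterval, ∀ n, 1 ≤ n → sAlpha f (a n) ⊆ sAlpha f y := by
  have hS : IsStaircaseMap f a b :=
    ⟨ha1, fun i hi => (horder i hi).1, fun i hi => (horder i hi).2, hlim, hf0, hlin1, hlin2⟩
  refine ⟨fun n hn x h₁ h₂ => hS.sAlpha_eq hn ⟨h₁, h₂⟩, hS.sAlpha_zero,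
    fun n hn => hS.sAlpha_a_ssubset hn, ?_⟩
  rintro ⟨y, hy⟩
  obtain ⟨n, hn, hnot⟩ := hS.exists_a_notMem_sAlpha y
  exact hnot (hy n hn (hS.a_mem_sAlpha hn le_rfl (hS.a_mem_Ioc hn)))

theorem stmt16 (f : unitInterval → unitInterval) (hf : Continuous f)
    (a b : ℕ → unitInterval)
    (ha1 : a 1 = 1)
    (horder : ∀ i, 1 ≤ i → a (i + 1) < b i ∧ b i < a i)
    (hlim : Tendsto (fun i => (a i : ℝ)) atTop (nhds 0))
    (hf0 : f 0 = 0)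
    (hfa : ∀ i, 1 ≤ i → f (a i) = a i)
    (hfb : ∀ i, 1 ≤ i → f (b i) = a (i + 2))
    (hlin1 : ∀ i, 1 ≤ i → ∀ x : unitInterval, a (i + 1) ≤ x → x ≤ b i →
      (f x : ℝ) = (a (i + 1) : ℝ) +
        (((a (i + 2) : ℝ) - (a (i + 1) : ℝ)) / ((b i : ℝ) - (a (i + 1) : ℝ))) *
          ((x : ℝ) - (a (i + 1) : ℝ)))
    (hlin2 : ∀ i, 1 ≤ i → ∀ x : unitInterval, b i ≤ x → x ≤ a i →
      (f x : ℝ) = (a (i + 2) : ℝ) +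
        (((a i : ℝ) - (a (i + 2) : ℝ)) / ((a i : ℝ) - (b i : ℝ))) *
          ((x : ℝ) - (b i : ℝ))) :
    (∀ n, 1 ≤ n → ∀ x : unitInterval, a (n + 1) < x → x ≤ a n →
      sAlpha f x = {y | ∃ i, 1 ≤ i ∧ i ≤ n ∧ y = a i}) ∧
    sAlpha f 0 = {0} ∧
    (∀ n, 1 ≤ n → sAlpha f (a n) ⊂ sAlpha f (a (n + 1))) ∧
    ¬ ∃ y : unitInterval, ∀ n, 1 ≤ n → sAlpha f (a n) ⊆ sAlpha f y :=
  stmt16_general f a b ha1 horder hlim hf0 hlin1 hlin2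
end
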